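/- arXiv:2111.08838 — 2 statements merged into one kernel-verified Lean document; each statement's English description precedes it below -/
import Mathlib

section
/- For all integers n ≥ 1 and m ≥ 3, the corona graph P_n ∘ C_m is total edge product cordial; that is, there exists an edge labeling f* : E(P_n ∘ C_m) → {0,1} whose induced vertex labeling f satisfies |(v_f(0) + e_f(0)) − (v_f(1) + e_f(1))| ≤ 1. -/
open scoped Classical
open Finset SimpleGraph

/-- Adjacency relation of the corona product `G ∘ H`: take one copy of `G` and,
for each vertex `i` of `G`, a copy of `H` (indexed by `i`), joining `i` to every
vertex of its copy of `H`. -/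
def coronaAdj {α β : Type*} (G : SimpleGraph α) (H : SimpleGraph β) :
    α ⊕ α × β → α ⊕ α × β → Prop
  | Sum.inl u, Sum.inl v => G.Adj u v
  | Sum.inl u, Sum.inr (i, _) => u = i
  | Sum.inr (i, _), Sum.inl u => u = i
  | Sum.inr (i, x), Sum.inr (j, y) => i = j ∧ H.Adj x y

/-- The corona product `G ∘ H` of two simple graphs. -/
def corona {α β : Type*} (G : SimpleGraph α) (H : SimpleGraph β) :
    SimpleGraph (α ⊕ α × β) where
  Adj := coronaAdj G H
  symm := by
    constructor
    rintro (u | ⟨i, x⟩) (v | ⟨j, y⟩) h <;>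
      simp only [coronaAdj] at h ⊢
    · exact h.symm
    · exact h
    · exact h
    · exact ⟨h.1.symm, h.2.symm⟩
  loopless := by
    constructor
    rintro (u | ⟨i, x⟩) h <;> simp only [coronaAdj] at h
    · exact G.loopless.irrefl u h
    · exact H.loopless.irrefl x h.2

/-- The vertex labeling induced by an edge labeling `f`: the label of `v` is the
product of the labels of the edges incident to `v` (an empty product is `1`). -/
noncomputable def inducedLabel {α : Type*} [Fintype α] (G : SimpleGraph α)
    (f : Sym2 α → ℕ) (v : α) : ℕ :=
  ∏ u ∈ Finset.univ.filter (fun u => G.Adj v u), f s(v, u)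

/-- `eCount G f i` is the number of edges of `G` labeled `i` by `f`. -/
noncomputable def eCount {α : Type*} [Fintype α] (G : SimpleGraph α)
    (f : Sym2 α → ℕ) (i : ℕ) : ℕ :=
  (G.edgeFinset.filter (fun e => f e = i)).card

/-- `vCount G f i` is the number of vertices of `G` whose induced label is `i`. -/
noncomputable def vCount {α : Type*} [Fintype α] (G : SimpleGraph α)
    (f : Sym2 α → ℕ) (i : ℕ) : ℕ :=
  (Finset.univ.filter (fun v => inducedLabel G f v = i)).card

/-- `f` is a total edge product cordial labeling of `G`: it labels every edge `0` or `1`,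
and `|(v_f(0) + e_f(0)) - (v_f(1) + e_f(1))| ≤ 1`. -/
def IsTotalEdgeProductCordialLabeling {α : Type*} [Fintype α] (G : SimpleGraph α)
    (f : Sym2 α → ℕ) : Prop :=
  (∀ e ∈ G.edgeSet, f e = 0 ∨ f e = 1) ∧
  |((vCount G f 0 : ℤ) + (eCount G f 0 : ℤ)) - ((vCount G f 1 : ℤ) + (eCount G f 1 : ℤ))| ≤ 1

/-- `G` is total edge product cordial if it admits a total edge product cordial labeling. -/
def IsTotalEdgeProductCordial {α : Type*} [Fintype α] (G : SimpleGraph α) : Prop :=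
  ∃ f : Sym2 α → ℕ, IsTotalEdgeProductCordialLabeling G f

/-!
Label an edge `0` exactly when it lies in a chosen edge set `S`. The vertices labelled `0` are
then the vertices covered by `S`, and cordiality asks `2 (|S| + |V(S)|)` to be within `1` of
`|V| + |E|`.

In `G ∘ C_m` with `|G| = n`, index the pair `(i, x)` by `i + n x` and let `S` consist of the
first `s` spokes `i (i, x)` and the first `c` rim edges `(i, x) (i, x + 1)`, all other edges
getting `1`. If `c + n ≤ s`, every rim edge of `S` ends at an index below `s` and every hub vertex
is covered, so exactly `n + s` vertices are covered and the count is `2 s + c + n`. For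
`n ≤ s ≤ n m` and `0 ≤ c ≤ s - n` the value `2 s + c` runs through everything from `2 n + 2` to
`3 n m - n`, which contains the required `⌊(3 n m + |E(G)| - n) / 2⌋`.
-/

open Sum

section ZeroSet

variable {V : Type*}

noncomputable def zeroSetLabeling (S : Finset (Sym2 V)) (e : Sym2 V) : ℕ :=
  if e ∈ S then 0 else 1

lemma zeroSetLabeling_eq_zero_or_one (S : Finset (Sym2 V)) (e : Sym2 V) :
    zeroSetLabeling S e = 0 ∨ zeroSetLabeling S e = 1 := by
  unfold zeroSetLabeling
  split_ifs <;> simp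

variable [Fintype V] {G : SimpleGraph V}

lemma inducedLabel_eq_zero_or_one {f : Sym2 V → ℕ} (hf : ∀ e, f e = 0 ∨ f e = 1) (v : V) :
    inducedLabel G f v = 0 ∨ inducedLabel G f v = 1 :=
  or_iff_not_imp_left.mpr fun h => prod_eq_one fun _ hu =>
    (hf _).resolve_left fun h0 => h (prod_eq_zero hu h0)

lemma card_filter_eq_zero_add_card_filter_eq_one {ι : Type*} (s : Finset ι) {g : ι → ℕ}
    (hg : ∀ i ∈ s, g i = 0 ∨ g i = 1) : #{i ∈ s | g i = 0} + #{i ∈ s | g i = 1} = #s := by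
  rw [← card_filter_add_card_filter_not (s := s) (fun i => g i = 0)]
  congr 2
  refine filter_congr fun i hi => ?_
  have := hg i hi
  omega

lemma vCount_zero_add_vCount_one {f : Sym2 V → ℕ} (hf : ∀ e, f e = 0 ∨ f e = 1) :
    vCount G f 0 + vCount G f 1 = Fintype.card V :=
  card_filter_eq_zero_add_card_filter_eq_one univ fun v _ => inducedLabel_eq_zero_or_one hf v

lemma eCount_zero_add_eCount_one {f : Sym2 V → ℕ} (hf : ∀ e, f e = 0 ∨ f e = 1) :
    eCount G f 0 + eCount G f 1 = #G.edgeFinset :=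
  card_filter_eq_zero_add_card_filter_eq_one _ fun e _ => hf e

lemma isTotalEdgeProductCordialLabeling_iff {f : Sym2 V → ℕ} (hf : ∀ e, f e = 0 ∨ f e = 1) :
    IsTotalEdgeProductCordialLabeling G f ↔
      |2 * ((vCount G f 0 : ℤ) + eCount G f 0) - (Fintype.card V + #G.edgeFinset)| ≤ 1 := by
  have hv := vCount_zero_add_vCount_one (G := G) hf
  have he := eCount_zero_add_eCount_one (G := G) hf
  rw [IsTotalEdgeProductCordialLabeling, and_iff_right fun e _ => hf e, ← hv, ← he]
  push_cast
  ring_nf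

lemma inducedLabel_zeroSetLabeling_eq_zero_iff {S : Finset (Sym2 V)} (hS : S ⊆ G.edgeFinset)
    (v : V) : inducedLabel G (zeroSetLabeling S) v = 0 ↔ ∃ e ∈ S, v ∈ e := by
  simp only [inducedLabel, prod_eq_zero_iff, mem_filter, mem_univ, true_and, zeroSetLabeling,
    ite_eq_left_iff, one_ne_zero, imp_false, not_not]
  constructor
  · rintro ⟨u, -, hu⟩
    exact ⟨_, hu, Sym2.mem_mk_left v u⟩
  · rintro ⟨e, he, hv⟩
    obtain ⟨u, rfl⟩ := Sym2.mem_iff_exists.mp hv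
    exact ⟨u, mem_edgeFinset.mp (hS he), he⟩

lemma eCount_zeroSetLabeling {S : Finset (Sym2 V)} (hS : S ⊆ G.edgeFinset) :
    eCount G (zeroSetLabeling S) 0 = #S := by
  simp only [eCount, zeroSetLabeling, ite_eq_left_iff, one_ne_zero, imp_false, not_not,
    filter_mem_eq_inter, inter_eq_right.mpr hS]

noncomputable def coveredVertices (S : Finset (Sym2 V)) : Finset V := {v | ∃ e ∈ S, v ∈ e}

lemma mem_coveredVertices {S : Finset (Sym2 V)} {v : V} :
    v ∈ coveredVertices S ↔ ∃ e ∈ S, v ∈ e := by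
  simp [coveredVertices]

lemma vCount_zeroSetLabeling {S : Finset (Sym2 V)} (hS : S ⊆ G.edgeFinset) :
    vCount G (zeroSetLabeling S) 0 = #(coveredVertices S) := by
  rw [vCount]
  congr 1
  ext v
  rw [mem_filter, inducedLabel_zeroSetLabeling_eq_zero_iff hS, mem_coveredVertices]
  simp

theorem isTotalEdgeProductCordial_of_zeroSet (S : Finset (Sym2 V)) (hS : S ⊆ G.edgeFinset)
    (hZ : |2 * ((#(coveredVertices S) : ℤ) + #S) - (Fintype.card V + #G.edgeFinset)| ≤ 1) :
    IsTotalEdgeProductCordial G := by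
  refine ⟨zeroSetLabeling S,
    (isTotalEdgeProductCordialLabeling_iff (zeroSetLabeling_eq_zero_or_one S)).mpr ?_⟩
  rwa [vCount_zeroSetLabeling hS, eCount_zeroSetLabeling hS]

end ZeroSet

section FinCycle

variable {m : ℕ} [NeZero m]

lemma Fin.val_add_one_le (x : Fin m) : (x + 1).val ≤ x.val + 1 := by
  rw [Fin.val_add, Fin.val_one']
  exact (Nat.mod_le _ _).trans (Nat.add_le_add_left (Nat.mod_le _ _) _)

lemma Fin.add_one_add_one_ne_self (hm : 3 ≤ m) (x : Fin m) : x + 1 + 1 ≠ x := by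
  intro h
  rw [add_assoc, add_eq_left] at h
  have h2 := congrArg Fin.val h
  rw [Fin.val_add, Fin.val_one', Fin.val_zero, Nat.mod_eq_of_lt (by omega : 1 < m),
    Nat.mod_eq_of_lt (by omega : 2 < m)] at h2
  omega

lemma cycleGraph_adj_add_one (hm : 2 ≤ m) (x : Fin m) : (cycleGraph m).Adj x (x + 1) :=
  cycleGraph_adj'.mpr <| Or.inr <| by rw [add_sub_cancel_left, Fin.val_one', Nat.mod_eq_of_lt hm]

end FinCycle

namespace SimpleGraph

lemma card_edgeFinset_pathGraph (n : ℕ) : #(pathGraph n).edgeFinset = n - 1 := by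
  cases n with
  | zero => simp [edgeFinset_eq_empty, Subsingleton.elim (pathGraph 0) ⊥]
  | succ n =>
    have hE : (pathGraph (n + 1)).edgeFinset =
        univ.image fun i : Fin n => s(i.castSucc, i.succ) := by
      ext e
      induction e using Sym2.ind with
      | _ u v =>
        simp only [mem_edgeFinset, mem_edgeSet, pathGraph_adj, mem_image, mem_univ, true_and,
          Sym2.eq_iff, Fin.ext_iff, Fin.val_castSucc, Fin.val_succ]
        constructor
        · rintro (h | h)
          · exact ⟨⟨u, by omega⟩, Or.inl ⟨rfl, h⟩⟩
          · exact ⟨⟨v, by omega⟩, Or.inr ⟨rfl, h⟩⟩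
        · rintro ⟨i, hi⟩
          omega
    rw [hE, card_image_of_injective _ fun i j h => by simp [Fin.ext_iff] at h; omega]
    simp

lemma card_edgeFinset_cycleGraph {m : ℕ} (hm : 3 ≤ m) : #(cycleGraph m).edgeFinset = m := by
  obtain ⟨k, rfl⟩ : ∃ k, m = k + 3 := ⟨m - 3, by omega⟩
  have h := (cycleGraph (k + 3)).sum_degrees_eq_twice_card_edges
  simp only [cycleGraph_degree_three_le, sum_const, card_univ, Fintype.card_fin, smul_eq_mul] at h
  omega

end SimpleGraph

section Corona

variable {α β : Type*} (G : SimpleGraph α) (H : SimpleGraph β)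

@[simp] lemma corona_adj_inl_inl {u v : α} : (corona G H).Adj (inl u) (inl v) ↔ G.Adj u v :=
  Iff.rfl

@[simp] lemma corona_adj_inl_inr {u i : α} {x : β} :
    (corona G H).Adj (inl u) (inr (i, x)) ↔ u = i :=
  Iff.rfl

@[simp] lemma corona_adj_inr_inl {u i : α} {x : β} :
    (corona G H).Adj (inr (i, x)) (inl u) ↔ u = i :=
  Iff.rfl

@[simp] lemma corona_adj_inr_inr {i j : α} {x y : β} :
    (corona G H).Adj (inr (i, x)) (inr (j, y)) ↔ i = j ∧ H.Adj x y :=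
  Iff.rfl

def spoke (p : α × β) : Sym2 (α ⊕ α × β) := s(inl p.1, inr p)

lemma spoke_injective : Function.Injective (spoke : α × β → Sym2 (α ⊕ α × β)) := by
  intro p q h
  simp only [spoke, Sym2.eq_iff, inl.injEq, inr.injEq, reduceCtorEq, and_false, or_false] at h
  exact h.2

variable [Fintype α] [Fintype β]

lemma neighborFinset_corona_inl [DecidableRel G.Adj] (u : α) :
    (corona G H).neighborFinset (inl u) = (G.neighborFinset u).disjSum ({u} ×ˢ univ) := by
  ext (v | ⟨i, x⟩) <;> simp

lemma neighborFinset_corona_inr [DecidableRel H.Adj] (i : α) (x : β) :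
    (corona G H).neighborFinset (inr (i, x)) =
      ({i} : Finset α).disjSum ({i} ×ˢ H.neighborFinset x) := by
  ext (v | ⟨j, y⟩) <;> simp [eq_comm, and_comm]

theorem card_edgeFinset_corona [DecidableRel G.Adj] [DecidableRel H.Adj] :
    #(corona G H).edgeFinset =
      #G.edgeFinset + Fintype.card α * (Fintype.card β + #H.edgeFinset) := by
  have hsum := (corona G H).sum_degrees_eq_twice_card_edges
  simp only [← card_neighborFinset_eq_degree, Fintype.sum_sum_type, Fintype.sum_prod_type,
    neighborFinset_corona_inl, neighborFinset_corona_inr, card_disjSum, card_product,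
    card_singleton, one_mul, card_univ, sum_add_distrib] at hsum
  simp only [card_neighborFinset_eq_degree, sum_degrees_eq_twice_card_edges, sum_const,
    smul_eq_mul, card_univ] at hsum
  linarith

end Corona

section SpokeRimPrefix

def columnPrefix (n m s : ℕ) : Finset (Fin n × Fin m) := {p | p.1 + n * p.2 < s}

variable {n m : ℕ}

lemma card_columnPrefix {s : ℕ} (hs : s ≤ n * m) : #(columnPrefix n m s) = s := by
  rw [card_equiv ((Equiv.prodComm _ _).trans finProdFinEquiv) (t := {j : Fin (m * n) | j < s})
    fun p => by simp [columnPrefix, finProdFinEquiv], Fin.card_filter_val_lt, mul_comm]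
  exact min_eq_right hs

def rimStep [NeZero m] (p : Fin n × Fin m) : Sym2 (Fin n ⊕ Fin n × Fin m) :=
  s(inr p, inr (p.1, p.2 + 1))

def spokeRimPrefix [NeZero m] (s c : ℕ) : Finset (Sym2 (Fin n ⊕ Fin n × Fin m)) :=
  (columnPrefix n m s).image spoke ∪ (columnPrefix n m c).image rimStep

variable [NeZero m]

lemma rimStep_injective (hm : 3 ≤ m) : Function.Injective (rimStep : Fin n × Fin m → _) := by
  rintro ⟨i, x⟩ ⟨j, y⟩ h
  simp only [rimStep, Sym2.eq_iff, inr.injEq, Prod.mk.injEq] at h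
  rcases h with ⟨⟨rfl, rfl⟩, -⟩ | ⟨⟨rfl, rfl⟩, -, h⟩
  · rfl
  · exact absurd h (Fin.add_one_add_one_ne_self hm _)

lemma spokeRimPrefix_subset_edgeFinset (G : SimpleGraph (Fin n)) (hm : 2 ≤ m) (s c : ℕ) :
    spokeRimPrefix s c ⊆ (corona G (cycleGraph m)).edgeFinset := by
  intro e he
  simp only [spokeRimPrefix, mem_union, mem_image] at he
  rcases he with ⟨⟨i, x⟩, -, rfl⟩ | ⟨⟨i, x⟩, -, rfl⟩
  · simp [spoke]
  · simpa [rimStep] using cycleGraph_adj_add_one hm x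

lemma card_spokeRimPrefix (hm : 3 ≤ m) {s c : ℕ} (hs : s ≤ n * m) (hc : c ≤ n * m) :
    #(spokeRimPrefix (n := n) (m := m) s c) = s + c := by
  rw [spokeRimPrefix, card_union_of_disjoint, card_image_of_injective _ spoke_injective,
    card_image_of_injective _ (rimStep_injective hm), card_columnPrefix hs, card_columnPrefix hc]
  simp only [Finset.disjoint_left, mem_image]
  rintro _ ⟨p, -, rfl⟩ ⟨q, -, h⟩
  simp [spoke, rimStep] at h

lemma coveredVertices_spokeRimPrefix {s c : ℕ} (hcs : c + n ≤ s) :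
    coveredVertices (spokeRimPrefix (n := n) (m := m) s c) =
      univ.disjSum (columnPrefix n m s) := by
  ext (i | ⟨i, x⟩)
  · simp only [mem_coveredVertices, mem_univ, inl_mem_disjSum, iff_true]
    refine ⟨spoke (i, 0), mem_union_left _ (mem_image_of_mem _ ?_), Sym2.mem_mk_left _ _⟩
    simp [columnPrefix]
    omega
  · simp only [mem_coveredVertices, inr_mem_disjSum]
    constructor
    · rintro ⟨e, he, hv⟩
      simp only [spokeRimPrefix, mem_union, mem_image] at he
      rcases he with ⟨q, hq, rfl⟩ | ⟨⟨j, y⟩, hq, rfl⟩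
      · simp only [spoke, Sym2.mem_iff, reduceCtorEq, inr.injEq, false_or] at hv
        exact hv ▸ hq
      · simp only [rimStep, Sym2.mem_iff, inr.injEq, Prod.mk.injEq] at hv
        simp only [columnPrefix, mem_filter, mem_univ, true_and] at hq ⊢
        rcases hv with ⟨rfl, rfl⟩ | ⟨rfl, rfl⟩
        · omega
        · have := Nat.mul_le_mul_left n (Fin.val_add_one_le y)
          rw [Nat.mul_succ] at this
          omega
    · intro h
      exact ⟨spoke (i, x), mem_union_left _ (mem_image_of_mem _ h), Sym2.mem_mk_right _ _⟩

end SpokeRimPrefix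

theorem corona_cycleGraph_isTotalEdgeProductCordial {n m : ℕ} (G : SimpleGraph (Fin n))
    [DecidableRel G.Adj] (hm : 3 ≤ m) (hG : #G.edgeFinset + n ≤ 3 * (n * m)) :
    IsTotalEdgeProductCordial (corona G (cycleGraph m)) := by
  have : NeZero m := ⟨by omega⟩
  have h3n : 3 * n ≤ n * m := by nlinarith
  set y := (3 * (n * m) + #G.edgeFinset - n) / 2
  -- the least `s` with `y ≤ 3 s - n`, so that `c = y - 2 s` lies in `[0, s - n]`
  set s := (y + n + 2) / 3
  have hcs : y - 2 * s + n ≤ s := by omega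
  refine isTotalEdgeProductCordial_of_zeroSet (spokeRimPrefix s (y - 2 * s))
    (spokeRimPrefix_subset_edgeFinset G (by omega) _ _) ?_
  rw [coveredVertices_spokeRimPrefix hcs, card_disjSum, card_columnPrefix (by omega),
    card_spokeRimPrefix hm (by omega) (by omega), card_univ, card_edgeFinset_corona,
    card_edgeFinset_cycleGraph hm, Fintype.card_sum, Fintype.card_prod]
  simp only [Fintype.card_fin, mul_add]
  rw [abs_le]
  constructor <;> omega

theorem corona_path_cycle_isTotalEdgeProductCordial_general (n m : ℕ) (hm : 3 ≤ m) :
    IsTotalEdgeProductCordial (corona (pathGraph n) (cycleGraph m)) :=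
  corona_cycleGraph_isTotalEdgeProductCordial _ hm <| by
    rw [card_edgeFinset_pathGraph]
    have : 3 * n ≤ n * m := by nlinarith
    omega

/-- For all integers `n ≥ 1` and `m ≥ 3`, the corona graph `P_n ∘ C_m` is
total edge product cordial. -/
theorem corona_path_cycle_isTotalEdgeProductCordial (n m : ℕ) (hn : 1 ≤ n) (hm : 3 ≤ m) :
    IsTotalEdgeProductCordial (corona (pathGraph n) (cycleGraph m)) :=
  corona_path_cycle_isTotalEdgeProductCordial_general n m hm
end

section
/- Let n ≥ 3 be an odd integer and m ≥ 1 an odd integer. Then the corona graph P_n ∘ P_m admits an edge labeling f* : E(P_n ∘ P_m) → {0,1} whose induced vertex labeling f satisfies e_f(0) = n·m − 1, e_f(1) = n·m, v_f(0) = (n·m + n + 2)/2, and v_f(1) = (n + n·m − 2)/2. In particular |(v_f(0) + e_f(0)) − (v_f(1) + e_f(1))| ≤ 1, so P_n ∘ P_m is total edge product cordial for odd n ≥ 3 and odd m. -/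
open scoped Classical
open Finset SimpleGraph

/-!
Write `n = 2F + 1` and `m = 2t + 1`, and order the pendant vertices `(c, y)` of `P_n ∘ P_m`
lexicographically. Label `1` the spokes and pendant-path edges starting before `(F, t)` in this
order, together with the backbone edges up to hub `F`. A vertex then gets label `1` exactly when
it is one of the hubs `0, …, F - 1` or a pendant vertex before `(F, t)`, and a lexicographic
initial segment of `Fin a × Fin b` below `(F, t)` has `F b + t` elements. This gives
`e_f(1) = (F + 1) + (2F t + t) + (F (2t + 1) + t) = n m` and `v_f(1) = F + F m + t`; the
`0`-counts are the complements. Edges are counted through a bijective enumeration of the edges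
of a corona by the edges of its factors and its spokes.
-/

lemma Finset.card_filter_sum_type {α β : Type*} [Fintype α] [Fintype β] (P : α ⊕ β → Prop)
    [DecidablePred P] : #{x | P x} = #{a | P (.inl a)} + #{b | P (.inr b)} := by
  simp only [card_filter, Fintype.sum_sum_type]

lemma toLex_lt_toLex_iff_add_mul_lt {b c y F t : ℕ} (hy : y < b) (ht : t ≤ b) :
    toLex (c, y) < toLex (F, t) ↔ y + b * c < t + b * F := by
  rw [Prod.Lex.toLex_lt_toLex]
  rcases lt_trichotomy c F with h | rfl | h
  · have : b * (c + 1) ≤ b * F := Nat.mul_le_mul_left b h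
    simp only [h, true_or, true_iff]
    nlinarith
  · simp
  · have : b * (F + 1) ≤ b * c := Nat.mul_le_mul_left b h
    simp only [h.not_gt, h.ne', false_or, false_and, false_iff, not_lt]
    nlinarith

lemma Fin.card_filter_toLex_lt {a b F t : ℕ} (hF : F < a) (ht : t ≤ b) :
    #{q : Fin a × Fin b | toLex ((q.1 : ℕ), (q.2 : ℕ)) < toLex (F, t)} = F * b + t := by
  rw [card_equiv finProdFinEquiv (t := {r : Fin (a * b) | r < t + b * F})]
  · rw [Fin.card_filter_val_lt, min_eq_right (by nlinarith)]
    ring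
  · intro q
    simp [toLex_lt_toLex_iff_add_mul_lt q.2.isLt ht]

lemma Sym2.map_ne_of_mem_of_notMem_range {α β : Type*} {f : α → β} {x : β} {e : Sym2 β}
    (hx : x ∈ e) (hf : x ∉ Set.range f) (z : Sym2 α) : z.map f ≠ e := by
  rintro rfl
  obtain ⟨a, -, rfl⟩ := Sym2.mem_map.mp hx
  exact hf ⟨a, rfl⟩

namespace SimpleGraph

structure IsEdgeEnumeration {V ι : Type*} (G : SimpleGraph V) (φ : ι → Sym2 V) : Prop where
  injective : Function.Injective φ
  range_eq : Set.range φ = G.edgeSet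

namespace IsEdgeEnumeration

variable {V ι : Type*} {G : SimpleGraph V} {φ : ι → Sym2 V}

lemma indicator_apply (hφ : G.IsEdgeEnumeration φ) (S : Set ι) (i : ι) :
    (φ '' S).indicator 1 (φ i) = if i ∈ S then 1 else 0 := by
  simp [Set.indicator_apply, hφ.injective.mem_set_image]

lemma forall_adj_mem_image_iff (hφ : G.IsEdgeEnumeration φ) (S : Set ι) (v : V) :
    (∀ u, G.Adj v u → s(v, u) ∈ φ '' S) ↔ ∀ i, v ∈ φ i → i ∈ S := by
  constructor
  · intro h i hv
    obtain ⟨u, hu⟩ := Sym2.mem_iff_exists.mp hv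
    have hadj : G.Adj v u := by
      rw [← mem_edgeSet, ← hu, ← hφ.range_eq]
      exact Set.mem_range_self i
    have hmem := h u hadj
    rwa [← hu, hφ.injective.mem_set_image] at hmem
  · intro h u hadj
    obtain ⟨i, hi⟩ : s(v, u) ∈ Set.range φ := hφ.range_eq ▸ hadj
    exact ⟨i, h i (hi ▸ Sym2.mem_mk_left v u), hi⟩

variable [Fintype V] [Fintype ι]

lemma edgeFinset_eq_image (hφ : G.IsEdgeEnumeration φ) : G.edgeFinset = univ.image φ := by
  ext e
  simp [← hφ.range_eq]

lemma eCount_indicator (hφ : G.IsEdgeEnumeration φ) (S : Finset ι) (k : ℕ) :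
    eCount G ((φ '' S).indicator 1) k = #{i | (if i ∈ S then 1 else 0) = k} := by
  rw [eCount, hφ.edgeFinset_eq_image, filter_image, card_image_of_injective _ hφ.injective]
  congr 1
  ext i
  simp [hφ.indicator_apply]

lemma eCount_indicator_one (hφ : G.IsEdgeEnumeration φ) (S : Finset ι) :
    eCount G ((φ '' S).indicator 1) 1 = #S := by
  simp [hφ.eCount_indicator]

lemma eCount_indicator_zero_add_one (hφ : G.IsEdgeEnumeration φ) (S : Finset ι) :
    eCount G ((φ '' S).indicator 1) 0 + eCount G ((φ '' S).indicator 1) 1 = Fintype.card ι := by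
  simp [hφ.eCount_indicator, ← compl_filter, card_compl_add_card]

lemma inducedLabel_indicator (hφ : G.IsEdgeEnumeration φ) (S : Set ι) (v : V) :
    inducedLabel G ((φ '' S).indicator 1) v = if ∀ i, v ∈ φ i → i ∈ S then 1 else 0 := by
  simp only [inducedLabel, Set.indicator_apply, Pi.one_apply]
  rw [prod_ite_zero, prod_const_one]
  congr 1
  simpa using propext (hφ.forall_adj_mem_image_iff S v)

lemma vCount_indicator_one (hφ : G.IsEdgeEnumeration φ) (S : Set ι) :
    vCount G ((φ '' S).indicator 1) 1 = #{v | ∀ i, v ∈ φ i → i ∈ S} := by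
  simp [vCount, hφ.inducedLabel_indicator]

lemma vCount_indicator_zero_add_one (hφ : G.IsEdgeEnumeration φ) (S : Set ι) :
    vCount G ((φ '' S).indicator 1) 0 + vCount G ((φ '' S).indicator 1) 1 = Fintype.card V := by
  simp only [vCount, hφ.inducedLabel_indicator, ite_eq_right_iff, ite_eq_left_iff, one_ne_zero,
    zero_ne_one, imp_false, not_not]
  rw [add_comm, card_filter_add_card_filter_not, card_univ]

end IsEdgeEnumeration

def pathEdge (N : ℕ) (k : Fin N) : Sym2 (Fin (N + 1)) :=
  s(k.castSucc, k.succ)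

lemma isEdgeEnumeration_pathGraph (N : ℕ) :
    (pathGraph (N + 1)).IsEdgeEnumeration (pathEdge N) where
  injective a b h := by
    rcases Sym2.eq_iff.mp h with ⟨h₁, -⟩ | ⟨h₁, h₂⟩
    · exact Fin.castSucc_injective _ h₁
    · simp only [Fin.ext_iff, Fin.val_castSucc, Fin.val_succ] at h₁ h₂
      omega
  range_eq := by
    ext e
    induction e using Sym2.ind with
    | _ u v =>
      simp only [pathEdge, Set.mem_range, mem_edgeSet, pathGraph_adj, Sym2.eq_iff, Fin.ext_iff,
        Fin.val_castSucc, Fin.val_succ]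
      constructor
      · rintro ⟨k, h | h⟩ <;> omega
      · rintro (h | h)
        · exact ⟨⟨u, by omega⟩, Or.inl ⟨rfl, h⟩⟩
        · exact ⟨⟨v, by omega⟩, Or.inr ⟨rfl, h⟩⟩

section Corona

variable {α β ιG ιH : Type*} {G : SimpleGraph α} {H : SimpleGraph β}

def coronaInl (G : SimpleGraph α) (H : SimpleGraph β) : G →g corona G H :=
  ⟨Sum.inl, id⟩

def coronaInr (G : SimpleGraph α) (H : SimpleGraph β) (a : α) : H →g corona G H :=
  ⟨fun b => .inr (a, b), And.intro rfl⟩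

def coronaEdge (φG : ιG → Sym2 α) (φH : ιH → Sym2 β) :
    ιG ⊕ α × ιH ⊕ α × β → Sym2 (α ⊕ α × β)
  | .inl k => (φG k).map .inl
  | .inr (.inl (a, k)) => (φH k).map fun b => .inr (a, b)
  | .inr (.inr (a, b)) => s(.inl a, .inr (a, b))

lemma coronaEdge_injective {φG : ιG → Sym2 α} {φH : ιH → Sym2 β} (hG : φG.Injective)
    (hH : φH.Injective) : (coronaEdge φG φH).Injective := by
  have inr_mem (a : α) (k : ιH) :
      .inr (a, (φH k).out.1) ∈ coronaEdge φG φH (.inr (.inl (a, k))) :=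
    Sym2.mem_map.mpr ⟨_, Sym2.out_fst_mem _, rfl⟩
  rintro (k₁ | ⟨a₁, k₁⟩ | ⟨a₁, b₁⟩) (k₂ | ⟨a₂, k₂⟩ | ⟨a₂, b₂⟩) h
  · exact congrArg _ (hG (Sym2.map.injective Sum.inl_injective h))
  · exact absurd h (Sym2.map_ne_of_mem_of_notMem_range (inr_mem a₂ k₂) (by simp) _)
  · exact absurd h (Sym2.map_ne_of_mem_of_notMem_range (Sym2.mem_mk_right _ _) (by simp) _)
  · exact absurd h.symm (Sym2.map_ne_of_mem_of_notMem_range (inr_mem a₁ k₁) (by simp) _)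
  · obtain ⟨b, -, hb⟩ := Sym2.mem_map.mp (h ▸ inr_mem a₁ k₁)
    obtain rfl : a₂ = a₁ := (Prod.ext_iff.mp (Sum.inr_injective hb)).1
    have hinj : Function.Injective fun b => (Sum.inr (a₂, b) : α ⊕ α × β) := fun _ _ h ↦ by
      simpa using h
    rw [hH (Sym2.map.injective hinj h)]
  · exact absurd h (Sym2.map_ne_of_mem_of_notMem_range (Sym2.mem_mk_left _ _) (by simp) _)
  · exact absurd h.symm (Sym2.map_ne_of_mem_of_notMem_range (Sym2.mem_mk_right _ _) (by simp) _)
  · exact absurd h.symm (Sym2.map_ne_of_mem_of_notMem_range (Sym2.mem_mk_left _ _) (by simp) _)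
  · simp_all [coronaEdge]

lemma IsEdgeEnumeration.corona {φG : ιG → Sym2 α} {φH : ιH → Sym2 β}
    (hG : G.IsEdgeEnumeration φG) (hH : H.IsEdgeEnumeration φH) :
    (corona G H).IsEdgeEnumeration (coronaEdge φG φH) where
  injective := coronaEdge_injective hG.injective hH.injective
  range_eq := by
    apply subset_antisymm
    · rintro _ ⟨k | ⟨a, k⟩ | ⟨a, b⟩, rfl⟩
      · exact (coronaInl G H).map_mem_edgeSet (hG.range_eq ▸ ⟨k, rfl⟩)
      · exact (coronaInr G H a).map_mem_edgeSet (hH.range_eq ▸ ⟨k, rfl⟩)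
      · exact (rfl : a = a)
    · intro e he
      induction e using Sym2.ind with | _ u v =>
      rcases u with a | ⟨a, x⟩ <;> rcases v with b | ⟨c, y⟩
      · obtain ⟨k, hk⟩ : s(a, b) ∈ Set.range φG := hG.range_eq ▸ he
        exact ⟨.inl k, by simp [coronaEdge, hk]⟩
      · obtain rfl : a = c := he
        exact ⟨.inr (.inr (a, y)), rfl⟩
      · obtain rfl : b = a := he
        exact ⟨.inr (.inr (b, x)), Sym2.eq_swap⟩
      · obtain ⟨rfl, hxy⟩ : a = c ∧ H.Adj x y := he
        obtain ⟨k, hk⟩ : s(x, y) ∈ Set.range φH := hH.range_eq ▸ hxy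
        exact ⟨.inr (.inl (a, k)), by simp [coronaEdge, hk]⟩

end Corona

section CoronaPathPath

variable {N M : ℕ}

/-- The backbone edge from hub `F` to hub `F + 1` is labeled `1` although hub `F` is not; it is
what makes `e_f(1) = n m` rather than `n m - 1`. -/
def coronaPathOneEdges (N M F t : ℕ) :
    Finset (Fin N ⊕ Fin (N + 1) × Fin M ⊕ Fin (N + 1) × Fin (M + 1)) :=
  ({k | (k : ℕ) ≤ F} : Finset (Fin N)).disjSum
    (({q | toLex ((q.1 : ℕ), (q.2 : ℕ)) < toLex (F, t)} : Finset (Fin (N + 1) × Fin M)).disjSum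
      {q | toLex ((q.1 : ℕ), (q.2 : ℕ)) < toLex (F, t)})

noncomputable def coronaPathLabeling (N M F t : ℕ) :
    Sym2 (Fin (N + 1) ⊕ Fin (N + 1) × Fin (M + 1)) → ℕ :=
  (coronaEdge (pathEdge N) (pathEdge M) '' ↑(coronaPathOneEdges N M F t)).indicator 1

variable (N M) in
lemma isEdgeEnumeration_corona_pathGraph :
    (corona (pathGraph (N + 1)) (pathGraph (M + 1))).IsEdgeEnumeration
      (coronaEdge (pathEdge N) (pathEdge M)) :=
  (isEdgeEnumeration_pathGraph N).corona (isEdgeEnumeration_pathGraph M)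

lemma card_coronaPathOneEdges {F t : ℕ} (hF : F < N) (ht : t ≤ M) :
    #(coronaPathOneEdges N M F t) = (F + 1) + (F * M + t) + (F * (M + 1) + t) := by
  have hbackbone : #{k : Fin N | (k : ℕ) ≤ F} = F + 1 := by
    simpa [Nat.lt_succ_iff, hF] using Fin.card_filter_val_lt (n := N) (m := F + 1)
  rw [coronaPathOneEdges, card_disjSum, card_disjSum, hbackbone,
    Fin.card_filter_toLex_lt (by omega) ht, Fin.card_filter_toLex_lt (by omega) (by omega)]
  ring

lemma hub_edges_mem_coronaPathOneEdges_iff {F t : ℕ} (ht : t ≤ M) (j : Fin (N + 1)) :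
    (∀ i, .inl j ∈ coronaEdge (pathEdge N) (pathEdge M) i → i ∈ coronaPathOneEdges N M F t) ↔
      (j : ℕ) < F := by
  simp only [Sum.forall, coronaEdge, pathEdge, coronaPathOneEdges, Sym2.map_mk, Sym2.mem_iff,
    Sum.inl.injEq, Prod.Lex.toLex_lt_toLex, inl_mem_disjSum, mem_filter, mem_univ, true_and,
    reduceCtorEq, or_self, inr_mem_disjSum, IsEmpty.forall_iff, implies_true, Prod.mk.eta,
    or_false, Prod.forall]
  constructor
  · rintro ⟨-, hspoke⟩
    simpa using hspoke j ⟨t, by omega⟩ rfl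
  · intro hj
    refine ⟨fun k hk => ?_, fun _ _ hc => Or.inl (hc ▸ hj)⟩
    rcases hk with rfl | rfl <;> simp only [Fin.val_castSucc, Fin.val_succ] at hj <;> omega

lemma pendant_edges_mem_coronaPathOneEdges_iff {F t : ℕ} (q : Fin (N + 1) × Fin (M + 1)) :
    (∀ i, .inr q ∈ coronaEdge (pathEdge N) (pathEdge M) i → i ∈ coronaPathOneEdges N M F t) ↔
      toLex ((q.1 : ℕ), (q.2 : ℕ)) < toLex (F, t) := by
  simp only [Sum.forall, coronaEdge, pathEdge, coronaPathOneEdges, Sym2.map_mk, Sym2.mem_iff,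
    reduceCtorEq, or_self, Prod.Lex.toLex_lt_toLex, inl_mem_disjSum, mem_filter, mem_univ,
    true_and, IsEmpty.forall_iff, implies_true, Sum.inr.injEq, inr_mem_disjSum, Prod.forall,
    Prod.mk.eta, false_or, forall_eq', and_iff_right_iff_imp]
  rintro h c k (rfl | rfl) <;> simp only [Fin.val_castSucc, Fin.val_succ] at h <;> omega

lemma eCount_coronaPathLabeling_one {F t : ℕ} (hF : F < N) (ht : t ≤ M) :
    eCount (corona (pathGraph (N + 1)) (pathGraph (M + 1))) (coronaPathLabeling N M F t) 1 =
      (F + 1) + (F * M + t) + (F * (M + 1) + t) := by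
  rw [coronaPathLabeling, (isEdgeEnumeration_corona_pathGraph N M).eCount_indicator_one,
    card_coronaPathOneEdges hF ht]

lemma eCount_coronaPathLabeling_zero_add_one (F t : ℕ) :
    eCount (corona (pathGraph (N + 1)) (pathGraph (M + 1))) (coronaPathLabeling N M F t) 0 +
      eCount (corona (pathGraph (N + 1)) (pathGraph (M + 1))) (coronaPathLabeling N M F t) 1 =
      N + (N + 1) * M + (N + 1) * (M + 1) := by
  rw [coronaPathLabeling, (isEdgeEnumeration_corona_pathGraph N M).eCount_indicator_zero_add_one]
  simp only [Fintype.card_sum, Fintype.card_prod, Fintype.card_fin, add_assoc]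

lemma vCount_coronaPathLabeling_one {F t : ℕ} (hF : F ≤ N) (ht : t ≤ M) :
    vCount (corona (pathGraph (N + 1)) (pathGraph (M + 1))) (coronaPathLabeling N M F t) 1 =
      F + (F * (M + 1) + t) := by
  rw [coronaPathLabeling, (isEdgeEnumeration_corona_pathGraph N M).vCount_indicator_one,
    card_filter_sum_type]
  simp only [mem_coe]
  rw [filter_congr fun j _ => hub_edges_mem_coronaPathOneEdges_iff ht j,
    filter_congr fun q _ => pendant_edges_mem_coronaPathOneEdges_iff q, Fin.card_filter_val_lt,
    min_eq_right (by omega), Fin.card_filter_toLex_lt (by omega) (by omega)]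

lemma vCount_coronaPathLabeling_zero_add_one (F t : ℕ) :
    vCount (corona (pathGraph (N + 1)) (pathGraph (M + 1))) (coronaPathLabeling N M F t) 0 +
      vCount (corona (pathGraph (N + 1)) (pathGraph (M + 1))) (coronaPathLabeling N M F t) 1 =
      (N + 1) + (N + 1) * (M + 1) := by
  rw [coronaPathLabeling, (isEdgeEnumeration_corona_pathGraph N M).vCount_indicator_zero_add_one]
  simp only [Fintype.card_sum, Fintype.card_prod, Fintype.card_fin]

end CoronaPathPath

end SimpleGraph

theorem corona_path_path_odd_odd_counts_general (n m : ℕ) (hn : 3 ≤ n) (hno : Odd n)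
    (hmo : Odd m) :
    ∃ f : Sym2 (Fin n ⊕ Fin n × Fin m) → ℕ,
      (∀ e ∈ (corona (pathGraph n) (pathGraph m)).edgeSet, f e = 0 ∨ f e = 1) ∧
      eCount (corona (pathGraph n) (pathGraph m)) f 0 = n * m - 1 ∧
      eCount (corona (pathGraph n) (pathGraph m)) f 1 = n * m ∧
      vCount (corona (pathGraph n) (pathGraph m)) f 0 = (n * m + n + 2) / 2 ∧
      vCount (corona (pathGraph n) (pathGraph m)) f 1 = (n + n * m - 2) / 2 ∧
      |((vCount (corona (pathGraph n) (pathGraph m)) f 0 : ℤ) +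
          (eCount (corona (pathGraph n) (pathGraph m)) f 0 : ℤ)) -
        ((vCount (corona (pathGraph n) (pathGraph m)) f 1 : ℤ) +
          (eCount (corona (pathGraph n) (pathGraph m)) f 1 : ℤ))| ≤ 1 := by
  obtain ⟨F, rfl⟩ := hno
  obtain ⟨t, rfl⟩ := hmo
  have he1 := eCount_coronaPathLabeling_one (N := 2 * F) (M := 2 * t) (F := F) (t := t)
    (by omega) (by omega)
  have he := eCount_coronaPathLabeling_zero_add_one (N := 2 * F) (M := 2 * t) F t
  have hv1 := vCount_coronaPathLabeling_one (N := 2 * F) (M := 2 * t) (F := F) (t := t)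
    (by omega) (by omega)
  have hv := vCount_coronaPathLabeling_zero_add_one (N := 2 * F) (M := 2 * t) F t
  refine ⟨coronaPathLabeling (2 * F) (2 * t) F t, fun e _ => Set.indicator_eq_zero_or_self _ _ e,
    ?_, ?_, ?_, ?_, abs_le.mpr ⟨?_, ?_⟩⟩
  all_goals ring_nf at he1 he hv1 hv ⊢; omega

/-- For odd `n ≥ 3` and odd `m ≥ 1`, the corona graph `P_n ∘ P_m` admits an
edge labeling with `e_f(0) = nm - 1`, `e_f(1) = nm`, `v_f(0) = (nm + n + 2)/2`,
`v_f(1) = (n + nm - 2)/2`; in particular it is total edge product cordial. -/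
theorem corona_path_path_odd_odd_counts (n m : ℕ) (hn : 3 ≤ n) (hno : Odd n)
    (hm : 1 ≤ m) (hmo : Odd m) :
    ∃ f : Sym2 (Fin n ⊕ Fin n × Fin m) → ℕ,
      (∀ e ∈ (corona (pathGraph n) (pathGraph m)).edgeSet, f e = 0 ∨ f e = 1) ∧
      eCount (corona (pathGraph n) (pathGraph m)) f 0 = n * m - 1 ∧
      eCount (corona (pathGraph n) (pathGraph m)) f 1 = n * m ∧
      vCount (corona (pathGraph n) (pathGraph m)) f 0 = (n * m + n + 2) / 2 ∧
      vCount (corona (pathGraph n) (pathGraph m)) f 1 = (n + n * m - 2) / 2 ∧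
      |((vCount (corona (pathGraph n) (pathGraph m)) f 0 : ℤ) +
          (eCount (corona (pathGraph n) (pathGraph m)) f 0 : ℤ)) -
        ((vCount (corona (pathGraph n) (pathGraph m)) f 1 : ℤ) +
          (eCount (corona (pathGraph n) (pathGraph m)) f 1 : ℤ))| ≤ 1 :=
  corona_path_path_odd_odd_counts_general n m hn hno hmo
end
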